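/- Set performance difference lemma: for any two policies π_θ and π_β on the n-ary set-RL tree with fixed initial state s_0, bounded set objective f, and γ ∈ (0, 1/n), V^♯_{π_θ}(s_0) − V^♯_{π_β}(s_0) = (1/(1−γn)) · E_{s ~ d^♯_{π_θ}, a_{1:n} ~ π_θ(·|s)}[ A^♯_{π_β}(s, a_{1:n}) ], where A^♯_{π_β}(s, a_{1:n}) = Q^♯_{π_β}(s, a_{1:n}) − V^♯_{π_β}(s). -/

import Mathlib

/-!
Write `D = V_θ − V_β` and let `K_θ s s'` be the expected number of children of an `s`-node
that land in `s'` under `π_θ`. The Bellman equations for `V_θ` and `Q_β` show that the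
`π_θ`-average of the advantage `Q_β − V_β` at `s` is `D s − γ (K_θ D) s`. The depth-`t`
occupancy satisfies `μ_{t+1} = μ_t K_θ`, so summing against `γ^t μ_t` telescopes to
`μ_0 D = D s0`, and `d^♯ = (1 − γn) Σ_t γ^t μ_t` gives the claim. Every series converges
because `K_θ` has row sums `n` and `γ n < 1`.
-/

/-- Expected total set reward collected at depth `t` of the `n`-ary rollout tree rooted
at `s`, with stochastic transitions `T` and policy `π`. -/
noncomputable def sW {S A : Type} [Fintype S] [Fintype A] (n : ℕ)
    (T : S → A → S → ℝ) (π : S → A → ℝ) (f : S → (Fin n → A) → ℝ) : ℕ → S → ℝ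
  | 0, s => ∑ v : Fin n → A, (∏ k, π s (v k)) * f s v
  | t + 1, s => ∑ v : Fin n → A, (∏ k, π s (v k)) *
      ∑ i, ∑ s', T s (v i) s' * sW n T π f t s'

/-- Set value function `V^♯_π(s)`. -/
noncomputable def sV {S A : Type} [Fintype S] [Fintype A] (n : ℕ)
    (T : S → A → S → ℝ) (π : S → A → ℝ) (f : S → (Fin n → A) → ℝ) (γ : ℝ) (s : S) : ℝ :=
  ∑' t : ℕ, γ ^ t * sW n T π f t s

/-- Depth-`t` expected set reward with the root action set fixed to `v`. -/
noncomputable def sU {S A : Type} [Fintype S] [Fintype A] (n : ℕ)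
    (T : S → A → S → ℝ) (π : S → A → ℝ) (f : S → (Fin n → A) → ℝ)
    (s : S) (v : Fin n → A) : ℕ → ℝ
  | 0 => f s v
  | t + 1 => ∑ i, ∑ s', T s (v i) s' * sW n T π f t s'

/-- Set `Q`-function `Q^♯_π(s, a_{1:n})`. -/
noncomputable def sQ {S A : Type} [Fintype S] [Fintype A] (n : ℕ)
    (T : S → A → S → ℝ) (π : S → A → ℝ) (f : S → (Fin n → A) → ℝ) (γ : ℝ)
    (s : S) (v : Fin n → A) : ℝ :=
  ∑' t : ℕ, γ ^ t * sU n T π f s v t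

/-- Aggregated occupancy of depth-`t` nodes of the visitation tree of `π` started at `s0`:
`μ t s = Σ_{i<n^t} P(s0 → s at node (t,i), π)`. -/
noncomputable def sMu {S A : Type} [Fintype S] [Fintype A] [DecidableEq S] (n : ℕ)
    (T : S → A → S → ℝ) (π : S → A → ℝ) (s0 : S) : ℕ → S → ℝ
  | 0, s => if s = s0 then 1 else 0
  | t + 1, s' => ∑ s, sMu n T π s0 t s *
      ∑ v : Fin n → A, (∏ k, π s (v k)) * ∑ i, T s (v i) s'

/-- Normalized discounted state-visitation distribution `d^♯_π`. -/
noncomputable def sD {S A : Type} [Fintype S] [Fintype A] [DecidableEq S] (n : ℕ)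
    (T : S → A → S → ℝ) (π : S → A → ℝ) (γ : ℝ) (s0 : S) (s : S) : ℝ :=
  (1 - γ * n) * ∑' t : ℕ, γ ^ t * sMu n T π s0 t s

def IsStochastic {X Y : Type} [Fintype Y] (P : X → Y → ℝ) : Prop :=
  (∀ x y, 0 ≤ P x y) ∧ ∀ x, ∑ y, P x y = 1

theorem sum_prod_eq_one_of_sum_eq_one {X Y : Type} [Fintype Y] {P : X → Y → ℝ}
    (hP : ∀ x, ∑ y, P x y = 1) (n : ℕ) (x : X) : ∑ v : Fin n → Y, ∏ k, P x (v k) = 1 := by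
  rw [← Fintype.sum_pow, hP x, one_pow]

section Series

variable {γ : ℝ}

theorem summable_pow_mul_of_abs_le {c B : ℝ} {w : ℕ → ℝ} (hγ : 0 ≤ γ) (hc : 0 ≤ c)
    (hγc : γ * c < 1) (hw : ∀ t, |w t| ≤ B * c ^ t) : Summable fun t => γ ^ t * w t := by
  refine .of_norm_bounded ((summable_geometric_of_lt_one (mul_nonneg hγ hc) hγc).mul_left B)
    fun t => ?_
  rw [Real.norm_eq_abs, abs_mul, abs_of_nonneg (pow_nonneg hγ t), mul_pow]
  calc γ ^ t * |w t| ≤ γ ^ t * (B * c ^ t) := by gcongr; exact hw t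
    _ = B * (γ ^ t * c ^ t) := by ring

theorem tsum_pow_mul_eq_of_succ {ι : Type} [Fintype ι] {u : ℕ → ℝ} {w : ℕ → ι → ℝ}
    (c : ι → ℝ) (hw : ∀ i, Summable fun t => γ ^ t * w t i)
    (hu : ∀ t, u (t + 1) = ∑ i, c i * w t i) :
    ∑' t, γ ^ t * u t = u 0 + γ * ∑ i, c i * ∑' t, γ ^ t * w t i := by
  have htail : HasSum (fun t => γ ^ (t + 1) * u (t + 1))
      (γ * ∑ i, c i * ∑' t, γ ^ t * w t i) := by
    have hterm : (fun t => γ ^ (t + 1) * u (t + 1))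
        = fun t => ∑ i, γ * c i * (γ ^ t * w t i) := by
      funext t
      rw [hu, Finset.mul_sum]
      exact Finset.sum_congr rfl fun i _ => by ring
    have hsum : γ * ∑ i, c i * ∑' t, γ ^ t * w t i = ∑ i, γ * c i * ∑' t, γ ^ t * w t i := by
      rw [Finset.mul_sum]
      exact Finset.sum_congr rfl fun i _ => by ring
    rw [hterm, hsum]
    exact hasSum_sum fun i _ => (hw i).hasSum.mul_left (γ * c i)
  rw [(HasSum.zero_add (f := fun t => γ ^ t * u t) htail).tsum_eq, pow_zero, one_mul]

theorem tsum_pow_mul_sub_pow_succ {x : ℕ → ℝ} (hx : Summable fun t => γ ^ t * x t) :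
    ∑' t, γ ^ t * (x t - γ * x (t + 1)) = x 0 := by
  have hx' : Summable fun t => γ ^ (t + 1) * x (t + 1) := (summable_nat_add_iff 1).2 hx
  calc ∑' t, γ ^ t * (x t - γ * x (t + 1))
      = ∑' t, (γ ^ t * x t - γ ^ (t + 1) * x (t + 1)) := tsum_congr fun t => by ring
    _ = x 0 := by rw [hx.tsum_sub hx', hx.tsum_eq_zero_add]; simp

end Series

theorem abs_le_mul_pow_of_succ_eq {S : Type} [Fintype S] {K : S → S → ℝ} {c B : ℝ}
    {w : ℕ → S → ℝ} (hK0 : ∀ s s', 0 ≤ K s s') (hK : ∀ s, ∑ s', K s s' = c)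
    (hw : ∀ t s, w (t + 1) s = ∑ s', K s s' * w t s') (hw0 : ∀ s, |w 0 s| ≤ B) :
    ∀ t s, |w t s| ≤ B * c ^ t := by
  intro t
  induction t with
  | zero => simpa using hw0
  | succ t ih =>
    intro s
    calc |w (t + 1) s| ≤ ∑ s', K s s' * (B * c ^ t) := by
          rw [hw]
          refine (Finset.abs_sum_le_sum_abs _ _).trans (Finset.sum_le_sum fun s' _ => ?_)
          rw [abs_mul, abs_of_nonneg (hK0 s s')]
          exact mul_le_mul_of_nonneg_left (ih s') (hK0 s s')
      _ = B * c ^ (t + 1) := by rw [← Finset.sum_mul, hK, pow_succ]; ring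

section SetRL

variable {S A : Type} {n : ℕ}

/-- Expected number of the `n` children of a node at state `s` that land in state `s'`. -/
noncomputable def setKernel [Fintype A] (n : ℕ) (T : S → A → S → ℝ) (π : S → A → ℝ)
    (s s' : S) : ℝ :=
  ∑ v : Fin n → A, (∏ k, π s (v k)) * ∑ i, T s (v i) s'

noncomputable def setReward [Fintype A] (n : ℕ) (π : S → A → ℝ) (f : S → (Fin n → A) → ℝ)
    (s : S) : ℝ :=
  ∑ v : Fin n → A, (∏ k, π s (v k)) * f s v

variable {T : S → A → S → ℝ} {π : S → A → ℝ} {f : S → (Fin n → A) → ℝ} {γ : ℝ}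

theorem sum_transition_mul [Fintype S] (s : S) (v : Fin n → A) (g : S → ℝ) :
    ∑ i, ∑ s', T s (v i) s' * g s' = ∑ s', (∑ i, T s (v i) s') * g s' := by
  simp only [Finset.sum_mul]
  exact Finset.sum_comm

theorem abs_setReward_le [Fintype A] (hπ : IsStochastic π) {B : ℝ} (hf : ∀ s v, |f s v| ≤ B)
    (s : S) : |setReward n π f s| ≤ B := by
  calc |setReward n π f s| ≤ ∑ v : Fin n → A, (∏ k, π s (v k)) * B := by
        refine (Finset.abs_sum_le_sum_abs _ _).trans (Finset.sum_le_sum fun v _ => ?_)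
        have hv : 0 ≤ ∏ k, π s (v k) := Finset.prod_nonneg fun k _ => hπ.1 s (v k)
        rw [abs_mul, abs_of_nonneg hv]
        exact mul_le_mul_of_nonneg_left (hf s v) hv
    _ = B := by rw [← Finset.sum_mul, sum_prod_eq_one_of_sum_eq_one hπ.2, one_mul]

variable [Fintype S] [Fintype A]

theorem sum_prod_mul_sum_transition_mul (s : S) (g : S → ℝ) :
    ∑ v : Fin n → A, (∏ k, π s (v k)) * ∑ s', (∑ i, T s (v i) s') * g s'
      = ∑ s', setKernel n T π s s' * g s' := by
  simp only [setKernel, Finset.mul_sum, Finset.sum_mul, mul_assoc]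
  exact Finset.sum_comm

theorem setKernel_nonneg (hT : ∀ s, IsStochastic (T s)) (hπ : IsStochastic π) (s s' : S) :
    0 ≤ setKernel n T π s s' :=
  Finset.sum_nonneg fun v _ => mul_nonneg (Finset.prod_nonneg fun k _ => hπ.1 s (v k))
    (Finset.sum_nonneg fun _ _ => (hT s).1 _ _)

theorem sum_setKernel (hT : ∀ s, IsStochastic (T s)) (hπ : IsStochastic π) (s : S) :
    ∑ s', setKernel n T π s s' = n := by
  calc ∑ s', setKernel n T π s s' = ∑ s', setKernel n T π s s' * 1 := by simp only [mul_one]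
    _ = ∑ v : Fin n → A, (∏ k, π s (v k)) * ∑ s', (∑ i, T s (v i) s') * 1 :=
        (sum_prod_mul_sum_transition_mul s _).symm
    _ = ∑ v : Fin n → A, (∏ k, π s (v k)) * n := by
        refine Finset.sum_congr rfl fun v _ => ?_
        simp only [mul_one]
        rw [Finset.sum_comm]
        simp [(hT s).2]
    _ = n := by rw [← Finset.sum_mul, sum_prod_eq_one_of_sum_eq_one hπ.2, one_mul]

theorem sW_succ (t : ℕ) (s : S) :
    sW n T π f (t + 1) s = ∑ s', setKernel n T π s s' * sW n T π f t s' := by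
  simp only [sW, sum_transition_mul, sum_prod_mul_sum_transition_mul]

theorem sU_succ (s : S) (v : Fin n → A) (t : ℕ) :
    sU n T π f s v (t + 1) = ∑ s', (∑ i, T s (v i) s') * sW n T π f t s' :=
  sum_transition_mul s v _

theorem summable_sW (hT : ∀ s, IsStochastic (T s)) (hπ : IsStochastic π) {B : ℝ}
    (hf : ∀ s v, |f s v| ≤ B) (hγ : 0 ≤ γ) (hγn : γ * n < 1) (s : S) :
    Summable fun t => γ ^ t * sW n T π f t s :=
  summable_pow_mul_of_abs_le hγ n.cast_nonneg hγn fun t =>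
    abs_le_mul_pow_of_succ_eq (setKernel_nonneg hT hπ) (sum_setKernel hT hπ) sW_succ
      (abs_setReward_le hπ hf) t s

theorem sV_bellman (hW : ∀ s, Summable fun t => γ ^ t * sW n T π f t s) (s : S) :
    sV n T π f γ s = setReward n π f s + γ * ∑ s', setKernel n T π s s' * sV n T π f γ s' :=
  tsum_pow_mul_eq_of_succ _ hW (sW_succ · s)

theorem sQ_bellman (hW : ∀ s, Summable fun t => γ ^ t * sW n T π f t s) (s : S)
    (v : Fin n → A) :
    sQ n T π f γ s v = f s v + γ * ∑ s', (∑ i, T s (v i) s') * sV n T π f γ s' :=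
  tsum_pow_mul_eq_of_succ _ hW (sU_succ s v)

end SetRL

section Occupancy

variable {S A : Type} [Fintype S] [Fintype A] [DecidableEq S] {n : ℕ} {T : S → A → S → ℝ}
  {π : S → A → ℝ} {γ : ℝ}

theorem sMu_succ (s0 : S) (t : ℕ) (s' : S) :
    sMu n T π s0 (t + 1) s' = ∑ s, sMu n T π s0 t s * setKernel n T π s s' := rfl

theorem sMu_nonneg (hT : ∀ s, IsStochastic (T s)) (hπ : IsStochastic π) (s0 : S) (t : ℕ)
    (s : S) : 0 ≤ sMu n T π s0 t s := by
  induction t generalizing s with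
  | zero => unfold sMu; split_ifs <;> norm_num
  | succ t ih =>
    exact Finset.sum_nonneg fun s' _ => mul_nonneg (ih s') (setKernel_nonneg hT hπ s' s)

theorem sum_sMu (hT : ∀ s, IsStochastic (T s)) (hπ : IsStochastic π) (s0 : S) (t : ℕ) :
    ∑ s, sMu n T π s0 t s = (n : ℝ) ^ t := by
  induction t with
  | zero => simp [sMu]
  | succ t ih =>
    calc ∑ s', sMu n T π s0 (t + 1) s'
        = ∑ s, sMu n T π s0 t s * ∑ s', setKernel n T π s s' := by
          simp only [sMu_succ, Finset.mul_sum]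
          exact Finset.sum_comm
      _ = (n : ℝ) ^ (t + 1) := by
          simp only [sum_setKernel hT hπ, ← Finset.sum_mul, ih, pow_succ]

theorem summable_sMu (hT : ∀ s, IsStochastic (T s)) (hπ : IsStochastic π) (hγ : 0 ≤ γ)
    (hγn : γ * n < 1) (s0 s : S) : Summable fun t => γ ^ t * sMu n T π s0 t s :=
  summable_pow_mul_of_abs_le (B := 1) hγ n.cast_nonneg hγn fun t => by
    rw [abs_of_nonneg (sMu_nonneg hT hπ s0 t s), one_mul, ← sum_sMu hT hπ s0 t]
    exact Finset.single_le_sum (fun s' _ => sMu_nonneg hT hπ s0 t s') (Finset.mem_univ s)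

theorem sum_sMu_mul_sub_setKernel (s0 : S) (D : S → ℝ) (t : ℕ) :
    ∑ s, sMu n T π s0 t s * (D s - γ * ∑ s', setKernel n T π s s' * D s')
      = ∑ s, sMu n T π s0 t s * D s - γ * ∑ s, sMu n T π s0 (t + 1) s * D s := by
  simp only [sMu_succ, mul_sub, Finset.sum_sub_distrib, Finset.mul_sum, Finset.sum_mul]
  congr 1
  rw [Finset.sum_comm]
  exact Finset.sum_congr rfl fun _ _ => Finset.sum_congr rfl fun _ _ => by ring

theorem sum_sD_mul_sub_setKernel (hT : ∀ s, IsStochastic (T s)) (hπ : IsStochastic π)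
    (hγ : 0 ≤ γ) (hγn : γ * n < 1) (s0 : S) (D : S → ℝ) :
    ∑ s, sD n T π γ s0 s * (D s - γ * ∑ s', setKernel n T π s s' * D s')
      = (1 - γ * n) * D s0 := by
  set G := fun s => D s - γ * ∑ s', setKernel n T π s s' * D s'
  have hsum : ∀ (g : S → ℝ) s, Summable fun t => γ ^ t * (sMu n T π s0 t s * g s) :=
    fun g s => by
      simpa only [mul_assoc] using (summable_sMu hT hπ hγ hγn s0 s).mul_right (g s)
  have hE : Summable fun t => γ ^ t * ∑ s, sMu n T π s0 t s * D s := by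
    simp only [Finset.mul_sum]
    exact summable_sum fun s _ => hsum D s
  calc ∑ s, sD n T π γ s0 s * G s
      = (1 - γ * n) * ∑' t, γ ^ t * ∑ s, sMu n T π s0 t s * G s := by
        simp only [sD, mul_assoc, ← tsum_mul_right, ← Finset.mul_sum]
        rw [← Summable.tsum_finsetSum fun s _ => hsum G s]
        simp only [Finset.mul_sum]
    _ = (1 - γ * n) * ∑' t, γ ^ t * (∑ s, sMu n T π s0 t s * D s
          - γ * ∑ s, sMu n T π s0 (t + 1) s * D s) := by
        simp only [G, sum_sMu_mul_sub_setKernel]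
    _ = (1 - γ * n) * D s0 := by
        rw [tsum_pow_mul_sub_pow_succ hE]
        simp [sMu]

end Occupancy

section Advantage

variable {S A : Type} [Fintype S] [Fintype A] {n : ℕ} {T : S → A → S → ℝ}
  {πθ πβ : S → A → ℝ} {f : S → (Fin n → A) → ℝ} {γ : ℝ}

theorem sum_prod_mul_advantage (hθ : ∀ s, ∑ a, πθ s a = 1)
    (hWθ : ∀ s, Summable fun t => γ ^ t * sW n T πθ f t s)
    (hWβ : ∀ s, Summable fun t => γ ^ t * sW n T πβ f t s) (s : S) :
    ∑ v : Fin n → A, (∏ k, πθ s (v k)) * (sQ n T πβ f γ s v - sV n T πβ f γ s)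
      = (sV n T πθ f γ s - sV n T πβ f γ s)
        - γ * ∑ s', setKernel n T πθ s s' * (sV n T πθ f γ s' - sV n T πβ f γ s') := by
  have hQ : ∑ v : Fin n → A, (∏ k, πθ s (v k)) * sQ n T πβ f γ s v
      = setReward n πθ f s + γ * ∑ s', setKernel n T πθ s s' * sV n T πβ f γ s' := by
    simp only [sQ_bellman hWβ, mul_add, Finset.sum_add_distrib, mul_left_comm _ γ,
      ← Finset.mul_sum, sum_prod_mul_sum_transition_mul]
    rfl
  rw [sV_bellman hWθ s]
  simp only [mul_sub, Finset.sum_sub_distrib, hQ, ← Finset.sum_mul,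
    sum_prod_eq_one_of_sum_eq_one hθ, one_mul]
  ring

end Advantage

theorem set_performance_difference_general {S A : Type} [Fintype S] [Fintype A] [DecidableEq S]
    (n : ℕ) (γ : ℝ) (h0 : 0 < γ) (h1 : γ < 1 / n)
    (T : S → A → S → ℝ) (hT0 : ∀ s a s', 0 ≤ T s a s') (hT1 : ∀ s a, ∑ s', T s a s' = 1)
    (πθ πβ : S → A → ℝ)
    (hθ0 : ∀ s a, 0 ≤ πθ s a) (hθ1 : ∀ s, ∑ a, πθ s a = 1)
    (hβ0 : ∀ s a, 0 ≤ πβ s a) (hβ1 : ∀ s, ∑ a, πβ s a = 1)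
    (f : S → (Fin n → A) → ℝ) (hf0 : ∀ s v, 0 ≤ f s v) (hf1 : ∀ s v, f s v ≤ 1)
    (s0 : S) :
    sV n T πθ f γ s0 - sV n T πβ f γ s0
      = (1 / (1 - γ * n)) * ∑ s, sD n T πθ γ s0 s *
          ∑ v : Fin n → A, (∏ k, πθ s (v k)) *
            (sQ n T πβ f γ s v - sV n T πβ f γ s) := by
  have hγn : γ * n < 1 := by
    rcases (Nat.cast_nonneg n : (0 : ℝ) ≤ n).eq_or_lt with hn | hn
    · rw [← hn, mul_zero]
      exact one_pos
    · rwa [lt_div_iff₀ hn] at h1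
  have hT : ∀ s, IsStochastic (T s) := fun s => ⟨hT0 s, hT1 s⟩
  have hf : ∀ s v, |f s v| ≤ 1 := fun s v => abs_le.2 ⟨by linarith [hf0 s v], hf1 s v⟩
  have hWθ := summable_sW hT ⟨hθ0, hθ1⟩ hf h0.le hγn
  have hWβ := summable_sW hT ⟨hβ0, hβ1⟩ hf h0.le hγn
  simp only [sum_prod_mul_advantage hθ1 hWθ hWβ]
  rw [sum_sD_mul_sub_setKernel hT ⟨hθ0, hθ1⟩ h0.le hγn s0, ← mul_assoc, one_div,
    inv_mul_cancel₀ (by linarith), one_mul]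

/-- Set performance difference lemma:
`V^♯_{π_θ}(s0) − V^♯_{π_β}(s0) = (1/(1−γn)) E_{s ~ d^♯_{π_θ}, a_{1:n} ~ π_θ}[A^♯_{π_β}(s,a_{1:n})]`. -/
theorem set_performance_difference {S A : Type} [Fintype S] [Fintype A] [DecidableEq S]
    (n : ℕ) (hn : 1 ≤ n) (γ : ℝ) (h0 : 0 < γ) (h1 : γ < 1 / n)
    (T : S → A → S → ℝ) (hT0 : ∀ s a s', 0 ≤ T s a s') (hT1 : ∀ s a, ∑ s', T s a s' = 1)
    (πθ πβ : S → A → ℝ)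
    (hθ0 : ∀ s a, 0 ≤ πθ s a) (hθ1 : ∀ s, ∑ a, πθ s a = 1)
    (hβ0 : ∀ s a, 0 ≤ πβ s a) (hβ1 : ∀ s, ∑ a, πβ s a = 1)
    (f : S → (Fin n → A) → ℝ) (hf0 : ∀ s v, 0 ≤ f s v) (hf1 : ∀ s v, f s v ≤ 1)
    (s0 : S) :
    sV n T πθ f γ s0 - sV n T πβ f γ s0
      = (1 / (1 - γ * n)) * ∑ s, sD n T πθ γ s0 s *
          ∑ v : Fin n → A, (∏ k, πθ s (v k)) *
            (sQ n T πβ f γ s v - sV n T πβ f γ s) :=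
  set_performance_difference_general n γ h0 h1 T hT0 hT1 πθ πβ hθ0 hθ1 hβ0 hβ1 f hf0 hf1 s0
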